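/- Online-to-offline regret identity for ridge-style incremental updates: let L_t : ℝⁿ → ℝ (t = 1,…,T) be differentiable convex loss functions, U_0 differentiable strictly convex, and define U_{t+1} = U_t + L_t with β_{t+1} = argmin_β U_{t+1}(β) (assumed to exist with ∇U_{t+1}(β_{t+1}) = 0). Then for every β ∈ ℝⁿ: ∑_{t=1}^{T} L_t(β_t) - (Δ_{U_0}(β, β_0) + ∑_{t=1}^{T} L_t(β)) = ∑_{t=1}^{T} Δ_{U_{t+1}}(β_t, β_{t+1}) - Δ_{U_{T+1}}(β, β_{T+1}). -/

import Mathlib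

/-!
At a critical point `β` of `G` the Bregman divergence `Δ_G(x, β)` is just the excess `G x - G β`.
Hence `Δ_{U_{t+1}}(β_t, β_{t+1}) = L_t(β_t) + U_t(β_t) - U_{t+1}(β_{t+1})`, and summing over `t`
telescopes; likewise `∑ L_t(b) = U_{T+1}(b) - U_1(b)`. The remaining boundary terms cancel because
`U_1 = U_0` has both `β_0` and `β_1` as minimizers, so `U_0(β_1) = U_0(β_0)`.
-/

/-- Bregman divergence of a differentiable function `G`. -/
noncomputable def bregman {n : ℕ} (G : EuclideanSpace ℝ (Fin n) → ℝ)
    (β' β : EuclideanSpace ℝ (Fin n)) : ℝ :=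
  G β' - G β - (inner ℝ (β' - β) (gradient G β) : ℝ)

open Finset

theorem Finset.sum_Icc_one_sub {M : Type*} [AddCommGroup M] (f : ℕ → M) (T : ℕ) :
    ∑ t ∈ Icc 1 T, (f (t + 1) - f t) = f (T + 1) - f 1 := by
  rw [← Ico_add_one_right_eq_Icc, sum_Ico_sub f (by omega)]

theorem IsMinOn.apply_eq_of_isMinOn {α β : Type*} [PartialOrder β] {f : α → β} {s : Set α}
    {a b : α} (ha : IsMinOn f s a) (hb : IsMinOn f s b) (has : a ∈ s) (hbs : b ∈ s) :
    f a = f b :=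
  le_antisymm (ha hbs) (hb has)

theorem bregman_eq_sub_of_gradient_eq_zero {n : ℕ} {G : EuclideanSpace ℝ (Fin n) → ℝ}
    {β : EuclideanSpace ℝ (Fin n)} (h : gradient G β = 0) (x : EuclideanSpace ℝ (Fin n)) :
    bregman G x β = G x - G β := by
  simp [bregman, h]

theorem online_to_offline_regret_identity_general {n T : ℕ}
    (U : ℕ → EuclideanSpace ℝ (Fin n) → ℝ)
    (L : ℕ → EuclideanSpace ℝ (Fin n) → ℝ)
    (β : ℕ → EuclideanSpace ℝ (Fin n))
    (hU1 : U 1 = U 0)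
    (hrec : ∀ t, 1 ≤ t → t ≤ T → U (t + 1) = fun x => U t x + L t x)
    (hmin : ∀ t, t ≤ T + 1 → IsMinOn (U t) Set.univ (β t))
    (hgrad : ∀ t, t ≤ T + 1 → gradient (U t) (β t) = 0)
    (b : EuclideanSpace ℝ (Fin n)) :
    ∑ t ∈ Finset.Icc 1 T, L t (β t)
        - (bregman (U 0) b (β 0) + ∑ t ∈ Finset.Icc 1 T, L t b)
      = ∑ t ∈ Finset.Icc 1 T, bregman (U (t + 1)) (β t) (β (t + 1))
        - bregman (U (T + 1)) b (β (T + 1)) := by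
  have hmin_eq : U 0 (β 1) = U 0 (β 0) :=
    (hU1 ▸ hmin 1 (by omega)).apply_eq_of_isMinOn (hmin 0 (by omega)) trivial trivial
  have hloss : ∑ t ∈ Icc 1 T, L t b = U (T + 1) b - U 1 b := by
    rw [← sum_Icc_one_sub (fun t => U t b)]
    refine sum_congr rfl fun t ht => ?_
    rw [mem_Icc] at ht
    simp only [hrec t ht.1 ht.2, add_sub_cancel_left]
  have hregret : ∑ t ∈ Icc 1 T, bregman (U (t + 1)) (β t) (β (t + 1))
      = ∑ t ∈ Icc 1 T, L t (β t) - (U (T + 1) (β (T + 1)) - U 1 (β 1)) := by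
    rw [← sum_Icc_one_sub (fun t => U t (β t)), ← sum_sub_distrib]
    refine sum_congr rfl fun t ht => ?_
    rw [mem_Icc] at ht
    have hstep : U (t + 1) (β t) = U t (β t) + L t (β t) := by rw [hrec t ht.1 ht.2]
    rw [bregman_eq_sub_of_gradient_eq_zero (hgrad (t + 1) (by omega)), hstep]
    ring
  rw [hregret, hloss, bregman_eq_sub_of_gradient_eq_zero (hgrad 0 (by omega)),
    bregman_eq_sub_of_gradient_eq_zero (hgrad (T + 1) le_rfl), hU1, hmin_eq]
  ring

/-- Online-to-offline regret identity for ridge-style incremental updates: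
with `U_{t+1} = U_t + L_t` and `β_t = argmin U_t` (first-order condition
`∇U_t(β_t) = 0`), for every comparator `β`,
`∑ L_t(β_t) - (Δ_{U_0}(β, β_0) + ∑ L_t(β))
   = ∑ Δ_{U_{t+1}}(β_t, β_{t+1}) - Δ_{U_{T+1}}(β, β_{T+1})`. -/
theorem online_to_offline_regret_identity {n T : ℕ}
    (U : ℕ → EuclideanSpace ℝ (Fin n) → ℝ)
    (L : ℕ → EuclideanSpace ℝ (Fin n) → ℝ)
    (β : ℕ → EuclideanSpace ℝ (Fin n))
    (hLdiff : ∀ t, Differentiable ℝ (L t))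
    (hLconv : ∀ t, ConvexOn ℝ Set.univ (L t))
    (hUdiff : ∀ t, Differentiable ℝ (U t))
    (hU0conv : StrictConvexOn ℝ Set.univ (U 0))
    (hU1 : U 1 = U 0)
    (hrec : ∀ t, 1 ≤ t → t ≤ T → U (t + 1) = fun x => U t x + L t x)
    (hmin : ∀ t, t ≤ T + 1 → IsMinOn (U t) Set.univ (β t))
    (hgrad : ∀ t, t ≤ T + 1 → gradient (U t) (β t) = 0)
    (b : EuclideanSpace ℝ (Fin n)) :
    ∑ t ∈ Finset.Icc 1 T, L t (β t)
        - (bregman (U 0) b (β 0) + ∑ t ∈ Finset.Icc 1 T, L t b)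
      = ∑ t ∈ Finset.Icc 1 T, bregman (U (t + 1)) (β t) (β (t + 1))
        - bregman (U (T + 1)) b (β (T + 1)) :=
  online_to_offline_regret_identity_general U L β hU1 hrec hmin hgrad b
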